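/- arXiv:2501.14789 — 10 statements merged into one kernel-verified Lean document; each statement's English description precedes it below -/
import Mathlib

section
/- Let G be a simple graph on a finite vertex set V and let k, u : V → ℕ satisfy k(v) ≤ u(N[v]) for all v ∈ V. Define k' : V → ℕ by k'(v) = u(N[v]) − k(v). Then L_{k,u}(G) = u(V) − γ_{k',u}(G) (note that the function u itself is a (k',u)-dominating function, so γ_{k',u}(G) is well defined). -/
open Classical Finset

/-- The closed neighborhood `N[v]` of `v` in `G`, as a finset. -/
noncomputable def closedNbhd {V : Type*} [Fintype V] (G : SimpleGraph V) (v : V) : Finset V :=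
  Finset.univ.filter (fun w => G.Adj v w ∨ w = v)

lemma mem_closedNbhd_self {V : Type*} [Fintype V] (G : SimpleGraph V) (v : V) :
    v ∈ closedNbhd G v := by simp [closedNbhd]

/-- `f` is a `(k,u)`-dominating function of `G`. -/
def IsDomFn {V : Type*} [Fintype V] (G : SimpleGraph V) (k u f : V → ℕ) : Prop :=
  ∀ v, f v ≤ u v ∧ k v ≤ ∑ w ∈ closedNbhd G v, f w

/-- `f` is a `(k,u)`-packing function of `G`. -/
def IsPackFn {V : Type*} [Fintype V] (G : SimpleGraph V) (k u f : V → ℕ) : Prop :=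
  ∀ v, f v ≤ u v ∧ ∑ w ∈ closedNbhd G v, f w ≤ k v

/-- `γ_{k,u}(G)`: minimum weight of a `(k,u)`-dominating function. -/
noncomputable def gammaKU {V : Type*} [Fintype V] (G : SimpleGraph V) (k u : V → ℕ) : ℕ :=
  sInf {s | ∃ f, IsDomFn G k u f ∧ s = ∑ v, f v}

/-- `L_{k,u}(G)`: maximum weight of a `(k,u)`-packing function. -/
noncomputable def LKU {V : Type*} [Fintype V] (G : SimpleGraph V) (k u : V → ℕ) : ℕ :=
  sSup {s | ∃ f, IsPackFn G k u f ∧ s = ∑ v, f v}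

/-! Complementation `f ↦ u - f` exchanges `(k,u)`-packing functions with `(k',u)`-dominating
functions, where `k'(v) = u(N[v]) - k(v)`, and turns weight `s` into weight `u(V) - s`; so the
maximum of the first family and the minimum of the second are exchanged as well. -/

section Complement

variable {V : Type*} [Fintype V] {G : SimpleGraph V} {k u f : V → ℕ}

lemma IsPackFn.le (hf : IsPackFn G k u f) : f ≤ u := fun v => (hf v).1

lemma IsDomFn.le (hf : IsDomFn G k u f) : f ≤ u := fun v => (hf v).1

lemma isDomFn_sub_iff_isPackFn (hfu : f ≤ u) :
    IsDomFn G (fun v => (∑ w ∈ closedNbhd G v, u w) - k v) u (u - f) ↔ IsPackFn G k u f := by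
  refine forall_congr' fun v => ?_
  have hsum : ∑ w ∈ closedNbhd G v, (u w - f w) =
      ∑ w ∈ closedNbhd G v, u w - ∑ w ∈ closedNbhd G v, f w :=
    sum_tsub_distrib _ fun w _ => hfu w
  have hsum_le : ∑ w ∈ closedNbhd G v, f w ≤ ∑ w ∈ closedNbhd G v, u w :=
    sum_le_sum fun w _ => hfu w
  simp only [Pi.sub_apply, hsum, tsub_le_self, true_and, hfu v]
  omega

lemma IsPackFn.isDomFn_sub (hf : IsPackFn G k u f) :
    IsDomFn G (fun v => (∑ w ∈ closedNbhd G v, u w) - k v) u (u - f) :=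
  (isDomFn_sub_iff_isPackFn hf.le).2 hf

lemma IsDomFn.isPackFn_sub (hf : IsDomFn G (fun v => (∑ w ∈ closedNbhd G v, u w) - k v) u f) :
    IsPackFn G k u (u - f) := by
  rw [← isDomFn_sub_iff_isPackFn tsub_le_self, tsub_tsub_cancel_of_le hf.le]
  exact hf

lemma bddAbove_packWeights (G : SimpleGraph V) (k u : V → ℕ) :
    BddAbove {s | ∃ f, IsPackFn G k u f ∧ s = ∑ v, f v} :=
  ⟨∑ v, u v, by rintro _ ⟨f, hf, rfl⟩; exact sum_le_sum fun v _ => hf.le v⟩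

lemma IsPackFn.sum_le_LKU (hf : IsPackFn G k u f) : ∑ v, f v ≤ LKU G k u :=
  le_csSup (bddAbove_packWeights G k u) ⟨f, hf, rfl⟩

lemma IsDomFn.gammaKU_le_sum (hf : IsDomFn G k u f) : gammaKU G k u ≤ ∑ v, f v :=
  Nat.sInf_le ⟨f, hf, rfl⟩

lemma exists_isPackFn_sum_eq_LKU (G : SimpleGraph V) (k u : V → ℕ) :
    ∃ f, IsPackFn G k u f ∧ LKU G k u = ∑ v, f v :=
  Nat.sSup_mem (s := {s | ∃ f, IsPackFn G k u f ∧ s = ∑ v, f v})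
    ⟨0, 0, fun _ => by simp, by simp⟩ (bddAbove_packWeights G k u)

lemma exists_isDomFn_sum_eq_gammaKU (hf : IsDomFn G k u f) :
    ∃ g, IsDomFn G k u g ∧ gammaKU G k u = ∑ v, g v :=
  Nat.sInf_mem (s := {s | ∃ f, IsDomFn G k u f ∧ s = ∑ v, f v}) ⟨_, f, hf, rfl⟩

end Complement

theorem stmt_0_general {V : Type*} [Fintype V] (G : SimpleGraph V) (k u : V → ℕ) :
    LKU G k u =
      (∑ v, u v) - gammaKU G (fun v => (∑ w ∈ closedNbhd G v, u w) - k v) u := by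
  set k' : V → ℕ := fun v => (∑ w ∈ closedNbhd G v, u w) - k v
  obtain ⟨f, hf, hL⟩ := exists_isPackFn_sum_eq_LKU G k u
  have hu : IsDomFn G k' u u := fun v => ⟨le_rfl, tsub_le_self⟩
  obtain ⟨g, hg, hγ⟩ := exists_isDomFn_sum_eq_gammaKU hu
  have hγ_le : gammaKU G k' u ≤ ∑ v, u v - LKU G k u := by
    rw [hL, ← sum_tsub_distrib _ fun v _ => hf.le v]
    exact hf.isDomFn_sub.gammaKU_le_sum
  have hL_ge : ∑ v, u v - gammaKU G k' u ≤ LKU G k u := by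
    rw [hγ, ← sum_tsub_distrib _ fun v _ => hg.le v]
    exact hg.isPackFn_sub.sum_le_LKU
  have hL_le : LKU G k u ≤ ∑ v, u v := hL ▸ sum_le_sum fun v _ => hf.le v
  omega

/-- if `k(v) ≤ u(N[v])` for all `v` and `k'(v) = u(N[v]) - k(v)`,
then `L_{k,u}(G) = u(V) - γ_{k',u}(G)`. -/
theorem stmt_0 {V : Type*} [Fintype V] (G : SimpleGraph V) (k u : V → ℕ)
    (hk : ∀ v, k v ≤ ∑ w ∈ closedNbhd G v, u w) :
    LKU G k u =
      (∑ v, u v) - gammaKU G (fun v => (∑ w ∈ closedNbhd G v, u w) - k v) u :=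
  stmt_0_general G k u
end

section
/- Let G be a simple graph on a finite vertex set V, let k, u : V → ℕ, and define k' : V → ℕ by k'(v) = u(N[v]) ∸ k(v) (truncated subtraction in ℕ). If f is a (k,u)-packing function of G, then the function g : V → ℕ defined by g(v) = u(v) − f(v) is a (k',u)-dominating function of G, and g(V) = u(V) − f(V). -/
open Classical Finset

/-- if `f` is a `(k,u)`-packing function, then `g = u - f` is a
`(k',u)`-dominating function where `k'(v) = u(N[v]) ∸ k(v)`, and `g(V) = u(V) - f(V)`. -/
theorem stmt_2 {V : Type*} [Fintype V] (G : SimpleGraph V) (k u f : V → ℕ)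
    (hf : IsPackFn G k u f) :
    IsDomFn G (fun v => (∑ w ∈ closedNbhd G v, u w) - k v) u (fun v => u v - f v) ∧
      (∑ v, (u v - f v)) = (∑ v, u v) - ∑ v, f v := by
  have sum_sub (s : Finset V) : ∑ w ∈ s, (u w - f w) = ∑ w ∈ s, u w - ∑ w ∈ s, f w :=
    sum_tsub_distrib s fun w _ => (hf w).1
  refine ⟨fun v => ⟨Nat.sub_le _ _, ?_⟩, sum_sub univ⟩
  rw [sum_sub]
  exact Nat.sub_le_sub_left (hf v).2 _
end

section
/- Suppose there exists at least one (ℓ,k,t)-dominating function of G. Then γ_{ℓ,k,t}(G) = γ_{ℓ,k₀,t₀}(G) + ∑_{v ∈ V \ 𝓕} t(v), where k₀ and t₀ are as defined in the context. -/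
open Classical Finset

/-- `f` is an `(ℓ,k,t)`-dominating function of `G`: `f ≤ ℓ` everywhere,
`f(N[v]) ≥ k(v)` for all `v`, and `f(v) = t(v)` at every non-free vertex
(`t v = none` means the vertex `v` is free). -/
def IsLDomFn {V : Type*} [Fintype V] (G : SimpleGraph V) (ℓ : ℕ) (k : V → ℕ)
    (t : V → Option ℕ) (f : V → ℕ) : Prop :=
  (∀ v, f v ≤ ℓ) ∧ (∀ v, k v ≤ ∑ w ∈ closedNbhd G v, f w) ∧
    (∀ v a, t v = some a → f v = a)

/-- `γ_{ℓ,k,t}(G)`: minimum weight of an `(ℓ,k,t)`-dominating function. -/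
noncomputable def gammaL {V : Type*} [Fintype V] (G : SimpleGraph V) (ℓ : ℕ) (k : V → ℕ)
    (t : V → Option ℕ) : ℕ :=
  sInf {s | ∃ f, IsLDomFn G ℓ k t f ∧ s = ∑ v, f v}

/-- `k₀(v) = k(v) ∸ ∑_{w ∈ N[v] \ 𝓕} t(w)`. -/
noncomputable def kZero {V : Type*} [Fintype V] (G : SimpleGraph V) (k : V → ℕ)
    (t : V → Option ℕ) : V → ℕ :=
  fun v => k v - ∑ w ∈ (closedNbhd G v).filter (fun w => (t w).isSome), (t w).getD 0

/-- `t₀(v) = 0` if `t(v) ≠ F`, and `t₀(v) = F` otherwise. -/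
def tZero {V : Type*} (t : V → Option ℕ) : V → Option ℕ :=
  fun v => (t v).map (fun _ => 0)

/-! Subtracting the prescribed values `t` from an `(ℓ,k,t)`-dominating function gives an
`(ℓ,k₀,t₀)`-dominating function, and adding them back inverts this; so the two sets of weights
differ by the translation `s ↦ s + ∑_{v ∉ 𝓕} t(v)`, which commutes with taking the minimum. -/

theorem Nat.sInf_image_add_const {s : Set ℕ} (hs : s.Nonempty) (c : ℕ) :
    sInf ((· + c) '' s) = sInf s + c :=
  le_antisymm (Nat.sInf_le (Set.mem_image_of_mem _ (Nat.sInf_mem hs)))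
    (le_csInf (hs.image _) fun _ ⟨_, hx, hxs⟩ => hxs ▸ Nat.add_le_add_right (Nat.sInf_le hx) c)

theorem sum_filter_isSome_getD {V : Type*} (t : V → Option ℕ) (s : Finset V) :
    ∑ w ∈ s.filter (fun w => (t w).isSome), (t w).getD 0 = ∑ w ∈ s, (t w).getD 0 :=
  Finset.sum_filter_of_ne fun w _ hw => Option.isSome_iff_ne_none.2 fun h => hw (by simp [h])

namespace IsLDomFn

variable {V : Type*} [Fintype V] {G : SimpleGraph V} {ℓ : ℕ} {k : V → ℕ} {t : V → Option ℕ}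
  {f g : V → ℕ}

theorem le_of_eq_some (hf : IsLDomFn G ℓ k t f) {v : V} {a : ℕ} (hv : t v = some a) : a ≤ ℓ :=
  hf.2.2 v a hv ▸ hf.1 v

theorem getD_le (hf : IsLDomFn G ℓ k t f) (v : V) : (t v).getD 0 ≤ f v := by
  cases hv : t v with
  | none => exact Nat.zero_le _
  | some a => exact (hf.2.2 v a hv).ge

theorem tsub_fixed (hf : IsLDomFn G ℓ k t f) :
    IsLDomFn G ℓ (kZero G k t) (tZero t) (fun v => f v - (t v).getD 0) := by
  refine ⟨fun v => (Nat.sub_le _ _).trans (hf.1 v), fun v => ?_, fun v a hv => ?_⟩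
  · rw [kZero, sum_filter_isSome_getD, tsub_le_iff_right, ← Finset.sum_add_distrib]
    calc k v ≤ ∑ w ∈ closedNbhd G v, f w := hf.2.1 v
      _ = ∑ w ∈ closedNbhd G v, (f w - (t w).getD 0 + (t w).getD 0) :=
        Finset.sum_congr rfl fun w _ => (Nat.sub_add_cancel (hf.getD_le w)).symm
  · cases hb : t v with
    | none => simp [tZero, hb] at hv
    | some b =>
      simp only [tZero, hb, Option.map_some, Option.some.injEq] at hv
      simp [hf.2.2 v b hb, hb, ← hv]

theorem add_fixed (ht : ∀ v a, t v = some a → a ≤ ℓ)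
    (hg : IsLDomFn G ℓ (kZero G k t) (tZero t) g) :
    IsLDomFn G ℓ k t (fun v => g v + (t v).getD 0) := by
  have hg_fixed : ∀ v a, t v = some a → g v = 0 := fun v a hv => hg.2.2 v 0 (by simp [tZero, hv])
  refine ⟨fun v => ?_, fun v => ?_, fun v a hv => by simp [hg_fixed v a hv, hv]⟩
  · cases hv : t v with
    | none => simpa [hv] using hg.1 v
    | some a => simpa [hv, hg_fixed v a hv] using ht v a hv
  · have hk := hg.2.1 v
    rw [kZero, sum_filter_isSome_getD, tsub_le_iff_right] at hk
    rwa [Finset.sum_add_distrib]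

end IsLDomFn

theorem setOf_weight_isLDomFn_eq_image {V : Type*} [Fintype V] (G : SimpleGraph V) (ℓ : ℕ)
    (k : V → ℕ) (t : V → Option ℕ) (ht : ∀ v a, t v = some a → a ≤ ℓ) :
    {s | ∃ f, IsLDomFn G ℓ k t f ∧ s = ∑ v, f v} =
      (· + ∑ v, (t v).getD 0) ''
        {s | ∃ g, IsLDomFn G ℓ (kZero G k t) (tZero t) g ∧ s = ∑ v, g v} := by
  ext s
  constructor
  · rintro ⟨f, hf, rfl⟩
    refine ⟨_, ⟨_, hf.tsub_fixed, rfl⟩, ?_⟩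
    dsimp only
    rw [← Finset.sum_add_distrib]
    exact Finset.sum_congr rfl fun v _ => Nat.sub_add_cancel (hf.getD_le v)
  · rintro ⟨_, ⟨g, hg, rfl⟩, rfl⟩
    exact ⟨_, hg.add_fixed ht, Finset.sum_add_distrib.symm⟩

theorem stmt_4_general {V : Type*} [Fintype V] (G : SimpleGraph V) (ℓ : ℕ) (k : V → ℕ)
    (t : V → Option ℕ) (hex : ∃ f, IsLDomFn G ℓ k t f) :
    gammaL G ℓ k t =
      gammaL G ℓ (kZero G k t) (tZero t) +
        ∑ v ∈ Finset.univ.filter (fun v => (t v).isSome), (t v).getD 0 := by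
  obtain ⟨f, hf⟩ := hex
  have ht : ∀ v a, t v = some a → a ≤ ℓ := fun v a => hf.le_of_eq_some
  have hne : {s | ∃ g, IsLDomFn G ℓ (kZero G k t) (tZero t) g ∧ s = ∑ v, g v}.Nonempty :=
    ⟨_, _, hf.tsub_fixed, rfl⟩
  rw [gammaL, gammaL, setOf_weight_isLDomFn_eq_image G ℓ k t ht, sum_filter_isSome_getD,
    Nat.sInf_image_add_const hne]

/-- if an `(ℓ,k,t)`-dominating function of `G` exists, then
`γ_{ℓ,k,t}(G) = γ_{ℓ,k₀,t₀}(G) + ∑_{v ∉ 𝓕} t(v)`. -/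
theorem stmt_4 {V : Type*} [Fintype V] (G : SimpleGraph V) (ℓ : ℕ) (k : V → ℕ)
    (t : V → Option ℕ) (ht : ∀ v a, t v = some a → a ≤ ℓ)
    (hex : ∃ f, IsLDomFn G ℓ k t f) :
    gammaL G ℓ k t =
      gammaL G ℓ (kZero G k t) (tZero t) +
        ∑ v ∈ Finset.univ.filter (fun v => (t v).isSome), (t v).getD 0 :=
  stmt_4_general G ℓ k t hex
end

section
/- Let G be a simple graph on a finite vertex set V and let k, u : V → ℕ. Define k̃, ũ : V → ℕ by k̃(v) = min{k(v), u(N[v])} and ũ(v) = min{u(v), k(v)}. Then L_{k,u}(G) = L_{k̃,ũ}(G). -/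
open Classical Finset

lemma LKU_congr {V : Type*} [Fintype V] {G : SimpleGraph V} {k u k' u' : V → ℕ}
    (h : ∀ f, IsPackFn G k u f ↔ IsPackFn G k' u' f) : LKU G k u = LKU G k' u' := by
  simp only [LKU, h]

/-- A packing function satisfies `f v ≤ f(N[v]) ≤ k v` and `f(N[v]) ≤ u(N[v])`, so capping `u` by `k`
and `k` by `u(N[v])` excludes none of them. -/
lemma isPackFn_iff_min {V : Type*} [Fintype V] (G : SimpleGraph V) (k u f : V → ℕ) :
    IsPackFn G k u f ↔
      IsPackFn G (fun v => min (k v) (∑ w ∈ closedNbhd G v, u w)) (fun v => min (u v) (k v)) f := by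
  refine ⟨fun h v => ?_, fun h v => ?_⟩
  · obtain ⟨hfu, hfk⟩ := h v
    have hf_le_sum : f v ≤ ∑ w ∈ closedNbhd G v, f w :=
      single_le_sum (fun w _ => Nat.zero_le (f w)) (mem_closedNbhd_self G v)
    exact ⟨le_min hfu (hf_le_sum.trans hfk), le_min hfk (sum_le_sum fun w _ => (h w).1)⟩
  · obtain ⟨hfu, hfk⟩ := h v
    exact ⟨hfu.trans (min_le_left _ _), hfk.trans (min_le_left _ _)⟩

/-- with `k̃(v) = min(k(v), u(N[v]))` and `ũ(v) = min(u(v), k(v))`,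
`L_{k,u}(G) = L_{k̃,ũ}(G)`. -/
theorem stmt_8 {V : Type*} [Fintype V] (G : SimpleGraph V) (k u : V → ℕ) :
    LKU G k u =
      LKU G (fun v => min (k v) (∑ w ∈ closedNbhd G v, u w)) (fun v => min (u v) (k v)) :=
  LKU_congr (isPackFn_iff_min G k u)
end

section
/- Let G be a simple graph on a finite vertex set V, let ℓ ∈ ℕ, let k : V → ℕ, and let u : V → ℕ be such that u(v) ∈ {0, ℓ} for every v ∈ V. Let S = {v ∈ V : u(v) = 0}, and let G̃ be the simple graph on the vertex set V ⊕ S (the disjoint union of V with a copy of S) in which: inl v and inl w are adjacent iff v and w are adjacent in G; inl v and inr s are adjacent iff v = s; and no two vertices inr s, inr s' are adjacent (i.e., G̃ is obtained from G by attaching a pendant vertex to each v with u(v) = 0). Define k̃ on V ⊕ S by k̃(inl v) = k(v) and k̃(inr s) = 0, and let ũ be the constant function ℓ on V ⊕ S. Then L_{k,u}(G) = L_{k̃,ũ}(G̃). -/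
open Classical Finset

/-- The graph obtained from `G` by attaching, for each `i : I`, a pendant vertex
`Sum.inr i` to the vertex `p i` of `G`. -/
def pendAttach {V : Type*} (G : SimpleGraph V) {I : Type*} (p : I → V) :
    SimpleGraph (V ⊕ I) where
  Adj x y :=
    match x, y with
    | Sum.inl v, Sum.inl w => G.Adj v w
    | Sum.inl v, Sum.inr i => v = p i
    | Sum.inr i, Sum.inl v => v = p i
    | Sum.inr _, Sum.inr _ => False
  symm := by
    constructor
    rintro (v | i) (w | j) h
    · exact G.adj_symm h
    · exact h
    · exact h
    · exact h.elim
  loopless := by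
    constructor
    rintro (v | i) h
    · exact G.irrefl h
    · exact h

set_option linter.unusedSectionVars false
section Aux
variable {V : Type*} [Fintype V] {I : Type*} [Fintype I] (G : SimpleGraph V) (p : I → V)

@[simp] lemma pend_adj_inl_inl (v w : V) :
    (pendAttach G p).Adj (Sum.inl v) (Sum.inl w) ↔ G.Adj v w := Iff.rfl
@[simp] lemma pend_adj_inl_inr (v : V) (i : I) :
    (pendAttach G p).Adj (Sum.inl v) (Sum.inr i) ↔ v = p i := Iff.rfl
@[simp] lemma pend_adj_inr_inl (v : V) (i : I) :
    (pendAttach G p).Adj (Sum.inr i) (Sum.inl v) ↔ v = p i := Iff.rfl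
@[simp] lemma pend_adj_inr_inr (i j : I) :
    (pendAttach G p).Adj (Sum.inr i) (Sum.inr j) ↔ False := Iff.rfl

lemma sum_nbhd_inl (g : V ⊕ I → ℕ) (hg : ∀ i, g (Sum.inr i) = 0) (v : V) :
    ∑ x ∈ closedNbhd (pendAttach G p) (Sum.inl v), g x
      = ∑ w ∈ closedNbhd G v, g (Sum.inl w) := by
  simp only [closedNbhd, Finset.sum_filter, Fintype.sum_sum_type]
  simp [hg]

lemma sum_nbhd_inr (g : V ⊕ I → ℕ) (i : I) :
    ∑ x ∈ closedNbhd (pendAttach G p) (Sum.inr i), g x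
      = g (Sum.inl (p i)) + g (Sum.inr i) := by
  simp only [closedNbhd, Finset.sum_filter, Fintype.sum_sum_type]
  simp [Sum.inr.injEq, eq_comm]

end Aux

/-- if `u(v) ∈ {0, ℓ}` for all `v`, `S = {v : u v = 0}`, and `G̃` is
obtained from `G` by attaching a pendant vertex to each vertex of `S`, then with
`k̃ = Sum.elim k 0` and `ũ ≡ ℓ` we have `L_{k,u}(G) = L_{k̃,ũ}(G̃)`. -/
theorem stmt_9 {V : Type*} [Fintype V] (G : SimpleGraph V) (ℓ : ℕ) (k u : V → ℕ)
    (hu : ∀ v, u v = 0 ∨ u v = ℓ) :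
    LKU G k u =
      LKU (pendAttach G (Subtype.val : {v : V // u v = 0} → V))
        (Sum.elim k (fun _ => 0)) (fun _ => ℓ) := by
  unfold LKU
  congr 1
  ext s
  constructor
  · rintro ⟨f, hf, rfl⟩
    refine ⟨Sum.elim f 0, ?_, ?_⟩
    · rintro (v | i)
      · constructor
        · rcases hu v with h | h
          · have := (hf v).1
            simp [h] at this
            simp [this]
          · exact le_trans (by simpa using (hf v).1) (by rw [h])
        · rw [sum_nbhd_inl G _ _ (fun i => rfl) v]
          simpa using (hf v).2
      · constructor
        · simp
        · rw [sum_nbhd_inr]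
          have := (hf i.1).1
          simp [i.2] at this
          simp [this]
    · simp [Fintype.sum_sum_type]
  · rintro ⟨g, hg, rfl⟩
    have hinr : ∀ i, g (Sum.inr i) = 0 ∧ g (Sum.inl i.1) = 0 := by
      intro i
      have := (hg (Sum.inr i)).2
      rw [sum_nbhd_inr] at this
      simp at this
      omega
    refine ⟨fun v => g (Sum.inl v), ?_, ?_⟩
    · intro v
      constructor
      · rcases hu v with h | h
        · rw [h]
          exact le_of_eq (hinr ⟨v, h⟩).2
        · rw [h]; exact (hg (Sum.inl v)).1
      · have := (hg (Sum.inl v)).2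
        rw [sum_nbhd_inl G _ _ (fun i => (hinr i).1) v] at this
        simpa using this
    · simp [Fintype.sum_sum_type, fun i => (hinr i).1]
end

section
/- Let G be a simple graph on a finite vertex set V, let k : V → ℕ with k(x) ≥ 1 for all x ∈ V, and let 𝟙 denote the constant function 1 on V. Let w ∈ V be a pendant vertex of G (a vertex of degree exactly 1) with unique neighbor v, and let g be a (k,𝟙)-packing function of G. Then there exists a (k,𝟙)-packing function g' of G such that g'(V) ≥ g(V), g'(w) = 1, and g'(x) = g(x) for every x ∉ N[v]. -/
open Classical Finset

/-!
If `g w = 0`, delete one unit of weight from `N[v]`, taken at `v` itself when `g v = 1`. The result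
vanishes at `v` and leaves slack in `N[v]`, and since `N[w] = {w, v}` and `N[v]` are the only closed
neighbourhoods containing `w`, the value at `w` can then be raised to `1`, which regains the deleted unit.
-/

open Function

theorem Finset.sum_update_add_apply_of_mem {ι M : Type*} [AddCommMonoid M] [DecidableEq ι]
    {s : Finset ι} {i : ι} (hi : i ∈ s) (f : ι → M) (b : M) :
    ∑ x ∈ s, update f i b x + f i = ∑ x ∈ s, f x + b := by
  rw [sum_update_of_mem hi, sum_eq_add_sum_sdiff_singleton_of_mem hi]
  abel

section closedNbhd

variable {V : Type*} [Fintype V] {G : SimpleGraph V}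

lemma mem_closedNbhd_iff {x y : V} : y ∈ closedNbhd G x ↔ G.Adj x y ∨ y = x := by
  simp [closedNbhd]

lemma mem_closedNbhd_comm {x y : V} : y ∈ closedNbhd G x ↔ x ∈ closedNbhd G y := by
  simp only [mem_closedNbhd_iff, G.adj_comm, eq_comm]

lemma closedNbhd_eq_pair_of_pendant {w v : V} (hadj : G.Adj v w)
    (hpend : ∀ x, G.Adj w x → x = v) : closedNbhd G w = {w, v} := by
  ext x
  rw [mem_closedNbhd_iff, mem_insert, mem_singleton]
  constructor
  · rintro (h | h)
    · exact Or.inr (hpend x h)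
    · exact Or.inl h
  · rintro (rfl | rfl)
    · exact Or.inr rfl
    · exact Or.inl hadj.symm

end closedNbhd

namespace IsPackFn

variable {V : Type*} [Fintype V] {G : SimpleGraph V} {k : V → ℕ}

lemma mono {u f f' : V → ℕ} (hf : IsPackFn G k u f) (hle : f' ≤ f) : IsPackFn G k u f' :=
  fun x => ⟨(hle x).trans (hf x).1,
    (sum_le_sum fun y _ => hle y).trans (hf x).2⟩

lemma update_one {f : V → ℕ} {b : V} (hf : IsPackFn G k (fun _ => 1) f) (hb : f b = 0)
    (hslack : ∀ x, b ∈ closedNbhd G x → ∑ y ∈ closedNbhd G x, f y < k x) :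
    IsPackFn G k (fun _ => 1) (update f b 1) := by
  intro x
  refine ⟨?_, ?_⟩
  · rcases eq_or_ne x b with rfl | hxb
    · simp
    · simpa [hxb] using (hf x).1
  · by_cases hbx : b ∈ closedNbhd G x
    · have hsum := sum_update_add_apply_of_mem hbx f 1
      have := hslack x hbx
      omega
    · rw [sum_update_of_notMem hbx]
      exact (hf x).2

lemma update_pendant_one {f : V → ℕ} {w v : V} (hf : IsPackFn G k (fun _ => 1) f)
    (hkw : 1 ≤ k w) (hadj : G.Adj v w) (hpend : ∀ x, G.Adj w x → x = v)
    (hfw : f w = 0) (hfv : f v = 0) (hslack : ∑ y ∈ closedNbhd G v, f y < k v) :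
    IsPackFn G k (fun _ => 1) (update f w 1) := by
  refine hf.update_one hfw fun x hx => ?_
  rw [mem_closedNbhd_comm, closedNbhd_eq_pair_of_pendant hadj hpend, mem_insert,
    mem_singleton] at hx
  rcases hx with rfl | rfl
  · rw [closedNbhd_eq_pair_of_pendant hadj hpend, sum_pair hadj.ne.symm, hfw, hfv]
    exact hkw
  · exact hslack

lemma exists_le_slack_closedNbhd {g : V → ℕ} {v : V} (hg : IsPackFn G k (fun _ => 1) g)
    (hkv : 1 ≤ k v) :
    ∃ f ≤ g, f v = 0 ∧ ∑ y ∈ closedNbhd G v, f y < k v ∧ ∑ x, g x ≤ ∑ x, f x + 1 ∧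
      ∀ x, x ∉ closedNbhd G v → f x = g x := by
  have hg1 : ∀ x, g x ≤ 1 := fun x => (hg x).1
  by_cases hfree : g v = 0 ∧ ∑ y ∈ closedNbhd G v, g y < k v
  · exact ⟨g, le_rfl, hfree.1, hfree.2, by omega, fun _ _ => rfl⟩
  -- Remove a unit at `v` if there is one, and otherwise anywhere in the (then full) `N[v]`.
  obtain ⟨a, haN, hga, hav⟩ : ∃ a ∈ closedNbhd G v, g a = 1 ∧ (a = v ∨ g v = 0) := by
    by_cases hgv : g v = 0
    · have hfull : ∑ y ∈ closedNbhd G v, g y ≠ 0 := by have := (hg v).2; omega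
      obtain ⟨a, haN, ha⟩ := exists_ne_zero_of_sum_ne_zero hfull
      exact ⟨a, haN, by have := hg1 a; omega, Or.inr hgv⟩
    · exact ⟨v, mem_closedNbhd_self G v, by have := hg1 v; omega, Or.inl rfl⟩
  refine ⟨update g a 0, update_le_self_iff.2 (Nat.zero_le _), ?_, ?_, ?_, fun x hx => ?_⟩
  · rcases hav with rfl | hgv
    · exact update_self ..
    · simp [update_apply, hgv]
  · have := sum_update_add_apply_of_mem haN g 0
    have := (hg v).2
    omega
  · have := sum_update_add_apply_of_mem (mem_univ a) g 0
    omega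
  · exact update_of_ne (ne_of_mem_of_not_mem haN hx).symm ..

end IsPackFn

/-- if `k ≥ 1` everywhere, `w` is a pendant vertex with unique neighbor
`v`, and `g` is a `(k,𝟙)`-packing function, then there is a `(k,𝟙)`-packing function
`g'` with `g'(V) ≥ g(V)`, `g'(w) = 1`, and `g' = g` outside `N[v]`. -/
theorem stmt_10 {V : Type*} [Fintype V] (G : SimpleGraph V) (k : V → ℕ)
    (hk : ∀ x, 1 ≤ k x) (w v : V) (hadj : G.Adj v w)
    (hpend : ∀ x, G.Adj w x → x = v)
    (g : V → ℕ) (hg : IsPackFn G k (fun _ => 1) g) :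
    ∃ g' : V → ℕ, IsPackFn G k (fun _ => 1) g' ∧
      (∑ x, g x) ≤ (∑ x, g' x) ∧ g' w = 1 ∧
      ∀ x, x ∉ closedNbhd G v → g' x = g x := by
  obtain hgw | hgw : g w = 1 ∨ g w = 0 := by have : g w ≤ 1 := (hg w).1; omega
  · exact ⟨g, hg, le_rfl, hgw, fun _ _ => rfl⟩
  obtain ⟨f, hfg, hfv, hslack, hsum, hfeq⟩ := hg.exists_le_slack_closedNbhd (hk v)
  have hfw : f w = 0 := Nat.eq_zero_of_le_zero (hgw ▸ hfg w)
  have hwN : w ∈ closedNbhd G v := mem_closedNbhd_iff.2 (Or.inl hadj)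
  refine ⟨update f w 1, (hg.mono hfg).update_pendant_one (hk w) hadj hpend hfw hfv hslack,
    ?_, update_self .., fun x hx => ?_⟩
  · have := sum_update_add_apply_of_mem (mem_univ w) f 1
    omega
  · rw [update_of_ne (ne_of_mem_of_not_mem hwN hx).symm, hfeq x hx]
end

section
/- Let G be a simple graph on a finite vertex set V and let k, u : V → ℕ satisfy k(v) ≤ u(N[v]) for all v ∈ V. Let G' be the simple graph on the vertex set V' = (Σ v : V, Fin (u v)) ⊕ {v : V // u v = 0} in which: ⟨v,i⟩ and ⟨w,j⟩ are adjacent iff (v and w are adjacent in G) or (v = w and i ≠ j); ⟨v,i⟩ and inr ⟨w,_⟩ are adjacent iff v and w are adjacent in G; and inr ⟨v,_⟩ and inr ⟨w,_⟩ are adjacent iff v and w are adjacent in G (i.e., G' is obtained from G by replacing each vertex v with u(v) ≥ 1 by a clique on u(v) vertices, joining copies according to adjacency in G, and keeping vertices with u(v) = 0 unchanged). Define k' : V' → ℕ to assign to each vertex of V' the value k at its underlying vertex of V (k'(⟨v,i⟩) = k(v) and k'(inr ⟨v,_⟩) = k(v)), and define u' : V' → ℕ by u'(⟨v,i⟩)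 = 1 and u'(inr ⟨v,_⟩) = 0. Then γ_{k,u}(G) = γ_{k',u'}(G'). -/
open Classical Finset

/-- The graph obtained from `G` by replacing each vertex `v` with `u v ≥ 1` by a clique
on `u v` vertices (copies joined according to adjacency in `G`), keeping the vertices
with `u v = 0` unchanged. -/
def cliqueRepl {V : Type*} (G : SimpleGraph V) (u : V → ℕ) :
    SimpleGraph ((Σ v : V, Fin (u v)) ⊕ {v : V // u v = 0}) where
  Adj x y :=
    match x, y with
    | Sum.inl a, Sum.inl b => G.Adj a.1 b.1 ∨ (a.1 = b.1 ∧ a ≠ b)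
    | Sum.inl a, Sum.inr s => G.Adj a.1 s.1
    | Sum.inr s, Sum.inl a => G.Adj s.1 a.1
    | Sum.inr s, Sum.inr t => G.Adj s.1 t.1
  symm := by
    constructor
    rintro (a | s) (b | t) h
    · exact h.imp (fun ha => G.adj_symm ha) (fun hp => ⟨hp.1.symm, hp.2.symm⟩)
    · exact G.adj_symm h
    · exact G.adj_symm h
    · exact G.adj_symm h
  loopless := by
    constructor
    rintro (a | s) h
    · rcases h with h | ⟨_, h⟩
      · exact G.irrefl h
      · exact h rfl
    · exact G.irrefl h


lemma fib_sum (n m : ℕ) (h : m ≤ n) :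
    ∑ j : Fin n, (if (j : ℕ) < m then 1 else 0) = m := by
  rw [Fin.sum_univ_eq_sum_range (fun i => if i < m then 1 else 0) n,
    ← Finset.sum_filter]
  have h2 : (Finset.range n).filter (fun i => i < m) = Finset.range m := by
    ext i; simp; omega
  rw [h2]; simp

lemma key_sum {V : Type*} [Fintype V] (G : SimpleGraph V) (u : V → ℕ)
    (g : (Σ v : V, Fin (u v)) ⊕ {v : V // u v = 0} → ℕ)
    (hg : ∀ s, g (Sum.inr s) = 0)
    (x : (Σ v : V, Fin (u v)) ⊕ {v : V // u v = 0}) :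
    ∑ y ∈ closedNbhd (cliqueRepl G u) x, g y =
      ∑ w ∈ closedNbhd G (Sum.elim (fun a => a.1) (fun s => s.1) x),
        ∑ j : Fin (u w), g (Sum.inl ⟨w, j⟩) := by
  classical
  set v := Sum.elim (fun a => a.1) (fun s : {v : V // u v = 0} => s.1) x with hv
  have hchar : ∀ (w : V) (j : Fin (u w)),
      (Sum.inl ⟨w, j⟩ ∈ closedNbhd (cliqueRepl G u) x) ↔ (w ∈ closedNbhd G v) := by
    intro w j
    obtain (⟨v', i⟩ | ⟨v', h0⟩) := x
    · simp only [closedNbhd, mem_filter, mem_univ, true_and]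
      simp only [cliqueRepl, hv, Sum.elim_inl]
      constructor
      · rintro ((h | ⟨h, _⟩) | h)
        · exact Or.inl h
        · exact Or.inr h.symm
        · injection h with h'; exact Or.inr (by cases h'; rfl)
      · rintro (h | rfl)
        · exact Or.inl (Or.inl h)
        · by_cases hij : (⟨w, j⟩ : Σ v, Fin (u v)) = ⟨w, i⟩
          · exact Or.inr (by rw [hij])
          · exact Or.inl (Or.inr ⟨rfl, fun h => hij (by injection h with h1 h2; cases h1; cases h2; rfl)⟩)
    · simp only [closedNbhd, mem_filter, mem_univ, true_and]
      simp only [cliqueRepl, hv, Sum.elim_inr]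
      constructor
      · rintro (h | h)
        · exact Or.inl h
        · exact absurd h (by simp)
      · rintro (h | rfl)
        · exact Or.inl h
        · exact absurd j.isLt (by omega)
  rw [show closedNbhd (cliqueRepl G u) x =
      Finset.univ.filter (fun y => y ∈ closedNbhd (cliqueRepl G u) x) by
    ext y; simp]
  rw [Finset.sum_filter, Fintype.sum_sum_type]
  have h2 : ∑ s : {v : V // u v = 0},
      (if Sum.inr s ∈ closedNbhd (cliqueRepl G u) x then g (Sum.inr s) else 0) = 0 := by
    apply Finset.sum_eq_zero; intro s _; simp [hg]
  rw [h2, add_zero, ← Finset.univ_sigma_univ, Finset.sum_sigma]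
  have h3 : ∀ w : V, ∑ j : Fin (u w),
      (if Sum.inl ⟨w, j⟩ ∈ closedNbhd (cliqueRepl G u) x then g (Sum.inl ⟨w, j⟩) else 0) =
      if w ∈ closedNbhd G v then ∑ j : Fin (u w), g (Sum.inl ⟨w, j⟩) else 0 := by
    intro w
    by_cases hw : w ∈ closedNbhd G v
    · simp only [hw, if_true]
      exact Finset.sum_congr rfl fun j _ => by rw [if_pos ((hchar w j).2 hw)]
    · simp only [hw, if_false]
      exact Finset.sum_eq_zero fun j _ => by rw [if_neg (fun h => hw ((hchar w j).1 h))]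
  rw [Finset.sum_congr rfl fun w _ => h3 w, ← Finset.sum_filter]
  congr 1
  ext w; simp [closedNbhd]

lemma total_sum {V : Type*} [Fintype V] (u : V → ℕ)
    (g : (Σ v : V, Fin (u v)) ⊕ {v : V // u v = 0} → ℕ)
    (hg : ∀ s, g (Sum.inr s) = 0) :
    ∑ y, g y = ∑ v : V, ∑ j : Fin (u v), g (Sum.inl ⟨v, j⟩) := by
  classical
  rw [Fintype.sum_sum_type]
  have h2 : ∑ s : {v : V // u v = 0}, g (Sum.inr s) = 0 :=
    Finset.sum_eq_zero fun s _ => hg s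
  rw [h2, add_zero, ← Finset.univ_sigma_univ, Finset.sum_sigma]

/-- if `k(v) ≤ u(N[v])` for all `v`, then `γ_{k,u}(G) = γ_{k',u'}(G')`
where `G'` replaces each vertex `v` by a clique of size `u v`, `k'` assigns `k` of the
underlying vertex, and `u'` is `1` on clique vertices and `0` on the untouched vertices. -/
theorem stmt_12 {V : Type*} [Fintype V] (G : SimpleGraph V) (k u : V → ℕ)
    (hk : ∀ v, k v ≤ ∑ w ∈ closedNbhd G v, u w) :
    gammaKU G k u =
      gammaKU (cliqueRepl G u)
        (Sum.elim (fun a => k a.1) (fun s => k s.1))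
        (Sum.elim (fun _ => 1) (fun _ => 0)) := by
    classical
  unfold gammaKU
  congr 1
  ext s
  simp only [Set.mem_setOf_eq]
  constructor
  · rintro ⟨f, hf, rfl⟩
    set g : (Σ v : V, Fin (u v)) ⊕ {v : V // u v = 0} → ℕ :=
      Sum.elim (fun a => if (a.2 : ℕ) < f a.1 then 1 else 0) (fun _ => 0) with hgdef
    have hg0 : ∀ s, g (Sum.inr s) = 0 := fun _ => rfl
    have hfib : ∀ v : V, ∑ j : Fin (u v), g (Sum.inl ⟨v, j⟩) = f v := by
      intro v
      exact fib_sum (u v) (f v) (hf v).1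
    refine ⟨g, ?_, ?_⟩
    · intro x
      constructor
      · obtain (⟨v, i⟩ | s) := x
        · simp only [hgdef, Sum.elim_inl]; split <;> simp
        · simp [hgdef]
      · rw [key_sum G u g hg0 x,
          Finset.sum_congr rfl fun w _ => hfib w]
        obtain (⟨v, i⟩ | ⟨v, h0⟩) := x
        · exact (hf v).2
        · exact (hf v).2
    · rw [total_sum u g hg0, Finset.sum_congr rfl fun w _ => hfib w]
  · rintro ⟨g, hg, rfl⟩
    have hg0 : ∀ s, g (Sum.inr s) = 0 := fun s =>
      Nat.le_zero.1 (hg (Sum.inr s)).1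
    set f : V → ℕ := fun v => ∑ j : Fin (u v), g (Sum.inl ⟨v, j⟩) with hfdef
    refine ⟨f, ?_, ?_⟩
    · intro v
      constructor
      · calc f v ≤ ∑ _j : Fin (u v), 1 :=
              Finset.sum_le_sum fun j _ => (hg (Sum.inl ⟨v, j⟩)).1
          _ = u v := by simp
      · by_cases h0 : u v = 0
        · have := (hg (Sum.inr ⟨v, h0⟩)).2
          rwa [key_sum G u g hg0 (Sum.inr ⟨v, h0⟩)] at this
        · have := (hg (Sum.inl ⟨v, ⟨0, Nat.pos_of_ne_zero h0⟩⟩)).2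
          rwa [key_sum G u g hg0 (Sum.inl ⟨v, ⟨0, Nat.pos_of_ne_zero h0⟩⟩)] at this
    · rw [total_sum u g hg0]
end

section
/- Let G be a simple graph on a finite vertex set V with |V| = n ≥ 1, let k, u : V → ℕ, and let σ : Fin n ≃ V be any enumeration of V, writing v_i = σ(i). Suppose f : Fin n → ℕ satisfies, for every i, the greedy recursion f(i) = min( u(v_i), min_{w ∈ N[v_i]} ( k(w) ∸ ∑_{j < i, v_j ∈ N[w]} f(j) ) ), where ∸ is truncated subtraction in ℕ (the inner minimum is over the nonempty set N[v_i]). Then the function g : V → ℕ defined by g(v_i) = f(i) is a (k,u)-packing function of G. -/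
open Classical Finset

/-!
Fix `v`. Since `v ∈ N[w]` for every `w ∈ N[v]`, the greedy value of each vertex of `N[v]` is at
most `k v` minus the values already placed on `N[v]` earlier in the order; a running-sum induction
over `N[v]` in that order then keeps the total within `k v`.
-/

lemma mem_closedNbhd_comm_s13 {V : Type*} [Fintype V] (G : SimpleGraph V) {v w : V} :
    w ∈ closedNbhd G v ↔ v ∈ closedNbhd G w := by
  simp only [closedNbhd, mem_filter, mem_univ, true_and, G.adj_comm, eq_comm]

lemma sum_le_of_le_sub_sum_lt {α : Type*} [LinearOrder α] (s : Finset α) (f : α → ℕ) (K : ℕ)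
    (h : ∀ i ∈ s, f i ≤ K - ∑ j ∈ s.filter (· < i), f j) : ∑ j ∈ s, f j ≤ K := by
  induction s using Finset.induction_on_max with
  | empty => simp
  | insert a s hlt ih =>
    have hs : ∑ j ∈ s, f j ≤ K := ih fun i hi => by
      simpa [filter_insert, not_lt_of_gt (hlt i hi)] using h i (mem_insert_of_mem hi)
    have ha : f a ≤ K - ∑ j ∈ s, f j := by
      have hfilter : (insert a s).filter (· < a) = s := by
        rw [filter_insert, if_neg (lt_irrefl a), filter_true_of_mem hlt]
      simpa [hfilter] using h a (mem_insert_self a s)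
    rw [sum_insert fun has => lt_irrefl a (hlt a has)]
    omega

theorem stmt_13_general {V : Type*} [Fintype V] (G : SimpleGraph V) (k u : V → ℕ)
    (n : ℕ) (σ : Fin n ≃ V) (f : Fin n → ℕ)
    (hf : ∀ i : Fin n,
      f i = min (u (σ i))
        ((closedNbhd G (σ i)).inf' ⟨σ i, mem_closedNbhd_self G (σ i)⟩
          (fun w => k w -
            ∑ j ∈ Finset.univ.filter (fun j : Fin n => j < i ∧ σ j ∈ closedNbhd G w), f j))) :
    IsPackFn G k u (fun v => f (σ.symm v)) := by
  intro v
  refine ⟨by simpa using (hf (σ.symm v)).trans_le (min_le_left _ _), ?_⟩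
  set s := univ.filter (fun j : Fin n => σ j ∈ closedNbhd G v)
  have hreindex : ∑ w ∈ closedNbhd G v, f (σ.symm w) = ∑ j ∈ s, f j :=
    sum_equiv σ.symm (by simp [s]) (by simp)
  rw [hreindex]
  refine sum_le_of_le_sub_sum_lt s f (k v) fun i hi => ?_
  have hprefix : s.filter (· < i) = univ.filter (fun j => j < i ∧ σ j ∈ closedNbhd G v) := by
    simp only [s, filter_filter, and_comm]
  rw [hprefix, hf i]
  exact (min_le_right _ _).trans (inf'_le _ ((mem_closedNbhd_comm_s13 G).mp (mem_filter.mp hi).2))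

/-- the greedy function produced by the algorithm (processing the
vertices in the order `σ`) is a `(k,u)`-packing function of `G`. -/
theorem stmt_13 {V : Type*} [Fintype V] (G : SimpleGraph V) (k u : V → ℕ)
    (n : ℕ) (hn : 1 ≤ n) (σ : Fin n ≃ V) (f : Fin n → ℕ)
    (hf : ∀ i : Fin n,
      f i = min (u (σ i))
        ((closedNbhd G (σ i)).inf' ⟨σ i, mem_closedNbhd_self G (σ i)⟩
          (fun w => k w -
            ∑ j ∈ Finset.univ.filter (fun j : Fin n => j < i ∧ σ j ∈ closedNbhd G w), f j))) :
    IsPackFn G k u (fun v => f (σ.symm v)) :=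
  stmt_13_general G k u n σ f hf
end

section
/- Let f be an (ℓ,k,t)-dominating function of G, and define f' : V → ℕ by f'(v) = f(v) if v ∈ 𝓕 and f'(v) = 0 otherwise. Then f' is an (ℓ,k₀,t₀)-dominating function of G, and f'(V) = f(V) − ∑_{v ∈ V \ 𝓕} t(v). -/
open Classical Finset

def freePart {V : Type*} (t : V → Option ℕ) (f : V → ℕ) : V → ℕ :=
  fun v => if t v = none then f v else 0

section freePart

variable {V : Type*} {t : V → Option ℕ} {f : V → ℕ}

lemma freePart_le (v : V) : freePart t f v ≤ f v := by
  unfold freePart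
  split_ifs <;> omega

lemma sum_eq_sum_freePart_add_sum_fixed (hf : ∀ v a, t v = some a → f v = a) (s : Finset V) :
    ∑ w ∈ s, f w = ∑ w ∈ s, freePart t f w + ∑ w ∈ s.filter (fun w => (t w).isSome), (t w).getD 0 := by
  have h_fixed : ∑ w ∈ s.filter (fun w => (t w).isSome), f w =
      ∑ w ∈ s.filter (fun w => (t w).isSome), (t w).getD 0 := by
    refine Finset.sum_congr rfl fun w hw => ?_
    obtain ⟨a, ha⟩ := Option.isSome_iff_exists.mp (Finset.mem_filter.mp hw).2
    simp [hf w a ha, ha]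
  have h_free : ∑ w ∈ s, freePart t f w = ∑ w ∈ s.filter (fun w => ¬(t w).isSome), f w := by
    rw [Finset.sum_filter]
    refine Finset.sum_congr rfl fun w _ => ?_
    simp [freePart, Option.isSome_iff_ne_none]
  rw [h_free, ← h_fixed, Finset.sum_filter_not_add_sum_filter]

end freePart

lemma IsLDomFn.freePart {V : Type*} [Fintype V] {G : SimpleGraph V} {ℓ : ℕ} {k : V → ℕ}
    {t : V → Option ℕ} {f : V → ℕ} (hf : IsLDomFn G ℓ k t f) :
    IsLDomFn G ℓ (kZero G k t) (tZero t) (freePart t f) := by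
  obtain ⟨hℓ, hk, ht⟩ := hf
  refine ⟨fun v => (freePart_le v).trans (hℓ v), fun v => ?_, fun v a hv => ?_⟩
  · have h_split := sum_eq_sum_freePart_add_sum_fixed ht (closedNbhd G v)
    have h_dom := hk v
    unfold kZero
    omega
  · obtain ⟨b, hb, rfl⟩ := Option.map_eq_some_iff.mp hv
    simp [_root_.freePart, hb]

theorem stmt_15_general {V : Type*} [Fintype V] (G : SimpleGraph V) (ℓ : ℕ) (k : V → ℕ)
    (t : V → Option ℕ)
    (f : V → ℕ) (hf : IsLDomFn G ℓ k t f) :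
    IsLDomFn G ℓ (kZero G k t) (tZero t) (fun v => if t v = none then f v else 0) ∧
      (∑ v, if t v = none then f v else 0) =
        (∑ v, f v) - ∑ v ∈ Finset.univ.filter (fun v => (t v).isSome), (t v).getD 0 := by
  refine ⟨hf.freePart, ?_⟩
  have h_split := sum_eq_sum_freePart_add_sum_fixed hf.2.2 (Finset.univ : Finset V)
  unfold freePart at h_split
  omega

/-- if `f` is an `(ℓ,k,t)`-dominating function, then `f'`, equal to `f`
on the free vertices and `0` elsewhere, is an `(ℓ,k₀,t₀)`-dominating function with
`f'(V) = f(V) - ∑_{v ∉ 𝓕} t(v)`. -/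
theorem stmt_15 {V : Type*} [Fintype V] (G : SimpleGraph V) (ℓ : ℕ) (k : V → ℕ)
    (t : V → Option ℕ) (ht : ∀ v a, t v = some a → a ≤ ℓ)
    (f : V → ℕ) (hf : IsLDomFn G ℓ k t f) :
    IsLDomFn G ℓ (kZero G k t) (tZero t) (fun v => if t v = none then f v else 0) ∧
      (∑ v, if t v = none then f v else 0) =
        (∑ v, f v) - ∑ v ∈ Finset.univ.filter (fun v => (t v).isSome), (t v).getD 0 :=
  stmt_15_general G ℓ k t f hf
end

section
/- Assume that there exists at least one (ℓ,k,t)-dominating function of G (so that for every v ∈ V, ∑_{w ∈ N[v] \ 𝓕} t(w) together with ℓ·|N[v] ∩ 𝓕| can reach k(v); in particular the construction below is well defined). Let f' be an (ℓ,k₀,t₀)-dominating function of G, and define f : V → ℕ by f(v) = t(v) if v ∉ 𝓕 and f(v) = f'(v) otherwise. Then f is an (ℓ,k,t)-dominating function of G, and f(V) = f'(V) + ∑_{v ∈ V \ 𝓕} t(v). -/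
open Classical Finset

/-! Since `t₀ = 0` off the free vertices, `f'` vanishes there, so `f(U) = f'(U) + ∑_{U \ 𝓕} t`
for every `U ⊆ V`. For `U = N[v]` this gives `f(N[v]) ≥ k₀(v) + ∑_{N[v] \ 𝓕} t ≥ k(v)`. -/

theorem Finset.sum_getD_eq_sum_filter_isSome_add {ι M : Type*} [AddCommMonoid M] (s : Finset ι)
    (t : ι → Option M) (f : ι → M) (hf : ∀ i, (t i).isSome → f i = 0) :
    ∑ i ∈ s, (t i).getD (f i) =
      ∑ i ∈ s.filter (fun i => (t i).isSome), (t i).getD 0 + ∑ i ∈ s, f i := by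
  rw [Finset.sum_filter, ← Finset.sum_add_distrib]
  refine Finset.sum_congr rfl fun i _ => ?_
  cases hi : t i with
  | none => simp
  | some a => simp [hf i (by simp [hi])]

theorem IsLDomFn.eq_zero_of_isSome {V : Type*} [Fintype V] {G : SimpleGraph V} {ℓ : ℕ}
    {k : V → ℕ} {t : V → Option ℕ} {f : V → ℕ} (hf : IsLDomFn G ℓ k (tZero t) f) {v : V}
    (hv : (t v).isSome) : f v = 0 := by
  obtain ⟨a, ha⟩ := Option.isSome_iff_exists.mp hv
  exact hf.2.2 v 0 (by simp [tZero, ha])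

theorem IsLDomFn.getD_of_kZero {V : Type*} [Fintype V] {G : SimpleGraph V} {ℓ : ℕ}
    {k : V → ℕ} {t : V → Option ℕ} (ht : ∀ v a, t v = some a → a ≤ ℓ) {f : V → ℕ}
    (hf : IsLDomFn G ℓ (kZero G k t) (tZero t) f) :
    IsLDomFn G ℓ k t (fun v => (t v).getD (f v)) := by
  refine ⟨fun v => ?_, fun v => ?_, fun v a hv => by simp [hv]⟩
  · cases hv : t v with
    | none => simpa [hv] using hf.1 v
    | some a => simpa [hv] using ht v a hv
  · rw [Finset.sum_getD_eq_sum_filter_isSome_add _ t f fun w => hf.eq_zero_of_isSome]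
    exact le_add_tsub.trans (Nat.add_le_add_left (hf.2.1 v) _)

theorem stmt_16_general {V : Type*} [Fintype V] (G : SimpleGraph V) (ℓ : ℕ) (k : V → ℕ)
    (t : V → Option ℕ) (ht : ∀ v a, t v = some a → a ≤ ℓ)
    (f' : V → ℕ) (hf' : IsLDomFn G ℓ (kZero G k t) (tZero t) f') :
    IsLDomFn G ℓ k t (fun v => (t v).getD (f' v)) ∧
      (∑ v, (t v).getD (f' v)) =
        (∑ v, f' v) + ∑ v ∈ Finset.univ.filter (fun v => (t v).isSome), (t v).getD 0 :=
  ⟨hf'.getD_of_kZero ht, by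
    rw [Finset.sum_getD_eq_sum_filter_isSome_add _ t f' fun v => hf'.eq_zero_of_isSome,
      add_comm]⟩

/-- assuming an `(ℓ,k,t)`-dominating function of `G` exists, if `f'` is an
`(ℓ,k₀,t₀)`-dominating function, then `f`, equal to `t` on the non-free vertices and to
`f'` on the free ones, is an `(ℓ,k,t)`-dominating function with
`f(V) = f'(V) + ∑_{v ∉ 𝓕} t(v)`. -/
theorem stmt_16 {V : Type*} [Fintype V] (G : SimpleGraph V) (ℓ : ℕ) (k : V → ℕ)
    (t : V → Option ℕ) (ht : ∀ v a, t v = some a → a ≤ ℓ)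
    (hex : ∃ f, IsLDomFn G ℓ k t f)
    (f' : V → ℕ) (hf' : IsLDomFn G ℓ (kZero G k t) (tZero t) f') :
    IsLDomFn G ℓ k t (fun v => (t v).getD (f' v)) ∧
      (∑ v, (t v).getD (f' v)) =
        (∑ v, f' v) + ∑ v ∈ Finset.univ.filter (fun v => (t v).isSome), (t v).getD 0 :=
  stmt_16_general G ℓ k t ht f' hf'
end
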